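/- Let R be a commutative ring, S a multiplicative subset of R, M an R-module, and n ≥ 2 an integer. Then M is u-S-quasi-projective if and only if the n-fold direct sum M^(n) = M ⊕ M ⊕ ⋯ ⊕ M (n copies) is u-S-pseudo-projective. -/

import Mathlib

/-!  Definitions for uniformly-S-pseudo-projective modules
(M. Adarbeh, M. Saleh, "Uniformly-S-pseudo-projective modules"). -/

universe u v w

/-- `S` is a multiplicative subset of the commutative ring `R`:
`1 ∈ S`, `0 ∉ S`, and `S` is closed under multiplication. -/
def IsMultSubset {R : Type u} [CommRing R] (S : Set R) : Prop :=
  1 ∈ S ∧ (0 : R) ∉ S ∧ ∀ ⦃a b : R⦄, a ∈ S → b ∈ S → a * b ∈ S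

/-- An `R`-module `T` is `u`-`S`-torsion if some `s ∈ S` annihilates it. -/
def IsUSTorsion {R : Type u} [CommRing R] (S : Set R) (T : Type v) [AddCommGroup T]
    [Module R T] : Prop :=
  ∃ s ∈ S, ∀ t : T, s • t = 0

/-- `f` is a `u`-`S`-monomorphism: its kernel is `u`-`S`-torsion. -/
def IsUSMono {R : Type u} [CommRing R] (S : Set R) {M : Type v} {N : Type w}
    [AddCommGroup M] [Module R M] [AddCommGroup N] [Module R N] (f : M →ₗ[R] N) : Prop :=
  ∃ s ∈ S, ∀ m ∈ LinearMap.ker f, s • m = (0 : M)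

/-- `f` is a `u`-`S`-epimorphism: its cokernel is `u`-`S`-torsion. -/
def IsUSEpi {R : Type u} [CommRing R] (S : Set R) {M : Type v} {N : Type w}
    [AddCommGroup M] [Module R M] [AddCommGroup N] [Module R N] (f : M →ₗ[R] N) : Prop :=
  ∃ s ∈ S, ∀ n : N, s • n ∈ LinearMap.range f

/-- `f` is a `u`-`S`-isomorphism: both a `u`-`S`-monomorphism and a `u`-`S`-epimorphism. -/
def IsUSIso {R : Type u} [CommRing R] (S : Set R) {M : Type v} {N : Type w}
    [AddCommGroup M] [Module R M] [AddCommGroup N] [Module R N] (f : M →ₗ[R] N) : Prop :=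
  IsUSMono S f ∧ IsUSEpi S f

/-- `P` is `u`-`S`-pseudo-projective: for every submodule `K` of `P` there is `s ∈ S` such that
every `u`-`S`-epimorphism `f : P → P/K` satisfies `s • f = π_K ∘ g` for some endomorphism
`g` of `P`. -/
def IsUSPseudoProjective {R : Type u} [CommRing R] (S : Set R) (P : Type v)
    [AddCommGroup P] [Module R P] : Prop :=
  ∀ K : Submodule R P, ∃ s ∈ S, ∀ f : P →ₗ[R] P ⧸ K, IsUSEpi S f →
    ∃ g : P →ₗ[R] P, s • f = K.mkQ.comp g

/-- `M` is `u`-`S`-quasi-projective. -/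
def IsUSQuasiProjective {R : Type u} [CommRing R] (S : Set R) (M : Type v)
    [AddCommGroup M] [Module R M] : Prop :=
  ∀ K : Submodule R M, ∃ s ∈ S, ∀ f : M →ₗ[R] M ⧸ K,
    ∃ g : M →ₗ[R] M, s • f = K.mkQ.comp g

/-- `Q` is `u`-`S`-projective (test modules in `Type v₁`). -/
def IsUSProjective.{u₁, v₁, w₁} {R : Type u₁} [CommRing R] (S : Set R) (Q : Type w₁)
    [AddCommGroup Q] [Module R Q] : Prop :=
  ∀ (B C : Type v₁) [AddCommGroup B] [AddCommGroup C] [Module R B] [Module R C]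
    (g : B →ₗ[R] C), IsUSEpi S g →
      ∃ s ∈ S, ∀ h : Q →ₗ[R] C, ∃ h' : Q →ₗ[R] B, s • h = g.comp h'

/-- `M` is `u`-`S`-injective (test modules in `Type v₁`). -/
def IsUSInjective.{u₁, v₁, w₁} {R : Type u₁} [CommRing R] (S : Set R) (M : Type w₁)
    [AddCommGroup M] [Module R M] : Prop :=
  ∀ (A B : Type v₁) [AddCommGroup A] [AddCommGroup B] [Module R A] [Module R B]
    (f : A →ₗ[R] B), IsUSMono S f →
      ∃ s ∈ S, ∀ h : A →ₗ[R] M, ∃ h' : B →ₗ[R] M, s • h = h'.comp f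

/-- `E` is `u`-`S`-pseudo-injective. -/
def IsUSPseudoInjective {R : Type u} [CommRing R] (S : Set R) (E : Type v)
    [AddCommGroup E] [Module R E] : Prop :=
  ∀ K : Submodule R E, ∃ s ∈ S, ∀ f : ↥K →ₗ[R] E, IsUSMono S f →
    ∃ g : E →ₗ[R] E, g.comp K.subtype = s • f

/-- The sequence `0 → A →f B →g C → 0` is short `u`-`S`-exact. -/
def IsShortUSExact {R : Type u} [CommRing R] (S : Set R) {A B C : Type v}
    [AddCommGroup A] [Module R A] [AddCommGroup B] [Module R B] [AddCommGroup C] [Module R C]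
    (f : A →ₗ[R] B) (g : B →ₗ[R] C) : Prop :=
  IsUSMono S f ∧ IsUSEpi S g ∧
    ∃ s ∈ S, (∀ x ∈ LinearMap.ker g, s • x ∈ LinearMap.range f) ∧
      (∀ x ∈ LinearMap.range f, s • x ∈ LinearMap.ker g)

/-- The short `u`-`S`-exact sequence `0 → A →f B →g C → 0` is `u`-`S`-split:
some multiple `s • 1_A` of the identity factors back through `f`. -/
def IsUSSplitSeq {R : Type u} [CommRing R] (S : Set R) {A B : Type v}
    [AddCommGroup A] [Module R A] [AddCommGroup B] [Module R B] (f : A →ₗ[R] B) : Prop :=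
  ∃ s ∈ S, ∃ f' : B →ₗ[R] A, f'.comp f = s • (LinearMap.id : A →ₗ[R] A)

/-- `M` is a `u`-`S`-semisimple module (test sequences with modules in `Type v₁`). -/
def IsUSSemisimpleModule.{u₁, v₁} {R : Type u₁} [CommRing R] (S : Set R) (M : Type v₁)
    [AddCommGroup M] [Module R M] : Prop :=
  ∀ (A C : Type v₁) [AddCommGroup A] [AddCommGroup C] [Module R A] [Module R C]
    (f : A →ₗ[R] M) (g : M →ₗ[R] C), IsShortUSExact S f g → IsUSSplitSeq S f

/-- `R` is a `u`-`S`-semisimple ring: every free `R`-module is `u`-`S`-semisimple. -/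
def IsUSSemisimpleRing.{u₁, v₁} {R : Type u₁} [CommRing R] (S : Set R) : Prop :=
  ∀ (F : Type v₁) [AddCommGroup F] [Module R F], Module.Free R F →
    IsUSSemisimpleModule.{u₁, v₁} S F

/-- A submodule `N` of `M` is a `u`-`S`-direct summand of `M` if there is an `R`-module `N'`
and a `u`-`S`-isomorphism between `M` and `N ⊕ N'`. -/
def IsUSDirectSummand {R : Type u} [CommRing R] (S : Set R) {M : Type v}
    [AddCommGroup M] [Module R M] (N : Submodule R M) : Prop :=
  ∃ (N' : ModuleCat.{v} R) (h : M →ₗ[R] (↥N × ↥N')), IsUSIso S h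

/-- `A` is `u`-`S`-projective relative to `B`. -/
def IsUSProjectiveRel {R : Type u} [CommRing R] (S : Set R) (A : Type v) (B : Type w)
    [AddCommGroup A] [Module R A] [AddCommGroup B] [Module R B] : Prop :=
  ∀ K : Submodule R B, ∃ s ∈ S, ∀ f : A →ₗ[R] B ⧸ K,
    ∃ h : A →ₗ[R] B, s • f = K.mkQ.comp h

/-!
Quasi-projectivity of `M` is `u`-`S`-projectivity of `M` relative to `M`, and relative
projectivity passes to finite direct sums in both arguments (the constants `s ∈ S` of the
summands multiply). So `Mⁿ` is projective relative to `Mⁿ`, which is stronger than being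
pseudo-projective. Conversely, for `f : M → M/K` and two distinct indices `i ≠ j`, the map
`x ↦ f xᵢ + [xⱼ] : Mⁿ → M/K` is surjective, hence a `u`-`S`-epimorphism; pseudo-projectivity of
`Mⁿ` lifts it along `x ↦ [xᵢ]`, and restricting the lift to the `i`-th copy of `M` lifts `f`.
-/

open LinearMap Submodule

namespace IsUSProjectiveRel

variable {R : Type u} [CommRing R] {S : Set R} {A : Type v} {B : Type w}
  [AddCommGroup A] [Module R A] [AddCommGroup B] [Module R B]

theorem exists_lift {Q : Type*} [AddCommGroup Q] [Module R Q] (h : IsUSProjectiveRel S A B)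
    (φ : B →ₗ[R] Q) :
    ∃ s ∈ S, ∀ f : A →ₗ[R] Q, range f ≤ range φ → ∃ g : A →ₗ[R] B, s • f = φ ∘ₗ g := by
  obtain ⟨s, hs, hlift⟩ := h (ker φ)
  refine ⟨s, hs, fun f hf => ?_⟩
  obtain ⟨g, hg⟩ :=
    hlift (φ.quotKerEquivRange.symm.toLinearMap ∘ₗ f.codRestrict _ fun a => hf ⟨a, rfl⟩)
  refine ⟨g, LinearMap.ext fun a => ?_⟩
  simpa using congr(((φ.quotKerEquivRange ($hg a) : range φ) : Q))

theorem exists_lift_of_surjective {Q : Type*} [AddCommGroup Q] [Module R Q]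
    (h : IsUSProjectiveRel S A B) {φ : B →ₗ[R] Q} (hφ : Function.Surjective φ) :
    ∃ s ∈ S, ∀ f : A →ₗ[R] Q, ∃ g : A →ₗ[R] B, s • f = φ ∘ₗ g := by
  obtain ⟨s, hs, hlift⟩ := h.exists_lift φ
  exact ⟨s, hs, fun f => hlift f (by rw [range_eq_top.mpr hφ]; exact le_top)⟩

theorem of_linearEquiv {B' : Type*} [AddCommGroup B'] [Module R B']
    (h : IsUSProjectiveRel S A B) (e : B ≃ₗ[R] B') : IsUSProjectiveRel S A B' := by
  intro K
  obtain ⟨s, hs, hlift⟩ :=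
    h.exists_lift_of_surjective (φ := K.mkQ ∘ₗ e.toLinearMap) (K.mkQ_surjective.comp e.surjective)
  refine ⟨s, hs, fun f => ?_⟩
  obtain ⟨g, hg⟩ := hlift f
  exact ⟨e.toLinearMap ∘ₗ g, hg⟩

theorem prod_right {C : Type*} [AddCommGroup C] [Module R C]
    (hmul : ∀ ⦃a b : R⦄, a ∈ S → b ∈ S → a * b ∈ S)
    (hB : IsUSProjectiveRel S A B) (hC : IsUSProjectiveRel S A C) :
    IsUSProjectiveRel S A (B × C) := by
  intro K
  -- Lift `f` through `B` modulo the image `T` of `C`; the error then lies in `T` and lifts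
  -- through `C`.
  set T := range (K.mkQ ∘ₗ inr R B C)
  have hsurj : Function.Surjective (T.mkQ ∘ₗ K.mkQ ∘ₗ inl R B C) := by
    intro y
    obtain ⟨⟨b, c⟩, rfl⟩ := T.mkQ_surjective.comp K.mkQ_surjective y
    refine ⟨b, (Submodule.Quotient.eq T).mpr ⟨-c, ?_⟩⟩
    simp [← Submodule.Quotient.mk_sub]
  obtain ⟨s₁, hs₁, hlift₁⟩ := hB.exists_lift_of_surjective hsurj
  obtain ⟨s₂, hs₂, hlift₂⟩ := hC.exists_lift (K.mkQ ∘ₗ inr R B C)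
  refine ⟨s₁ * s₂, hmul hs₁ hs₂, fun f => ?_⟩
  obtain ⟨g₁, hg₁⟩ := hlift₁ (T.mkQ ∘ₗ f)
  set f₂ := s₁ • f - K.mkQ ∘ₗ inl R B C ∘ₗ g₁
  have hf₂ : range f₂ ≤ T := by
    rintro _ ⟨a, rfl⟩
    rw [← T.ker_mkQ, mem_ker]
    simpa [f₂, sub_eq_zero] using congr($hg₁ a)
  obtain ⟨g₂, hg₂⟩ := hlift₂ f₂ hf₂
  refine ⟨inl R B C ∘ₗ (s₂ • g₁) + inr R B C ∘ₗ g₂, ?_⟩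
  calc (s₁ * s₂) • f = s₂ • f₂ + s₂ • (K.mkQ ∘ₗ inl R B C ∘ₗ g₁) := by
        rw [mul_comm, mul_smul, ← smul_add, sub_add_cancel]
    _ = _ := by rw [hg₂, comp_add, comp_smul, add_comm]; rfl

theorem pi_right (h1 : 1 ∈ S) (hmul : ∀ ⦃a b : R⦄, a ∈ S → b ∈ S → a * b ∈ S)
    (h : IsUSProjectiveRel S A B) (ι : Type*) [Finite ι] :
    IsUSProjectiveRel S A (ι → B) := by
  induction ι using Finite.induction_empty_option with
  | of_equiv e hα => exact hα.of_linearEquiv (LinearEquiv.funCongrLeft R B e.symm)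
  | h_empty =>
    intro K
    exact ⟨1, h1, fun f => ⟨0, Subsingleton.elim _ _⟩⟩
  | h_option hα =>
    exact (h.prod_right hmul hα).of_linearEquiv
      (LinearEquiv.piOptionEquivProd (M := fun _ => B) R).symm

theorem pi_left {ι : Type*} [Fintype ι] [DecidableEq ι] (h : IsUSProjectiveRel S A B) :
    IsUSProjectiveRel S (ι → A) B := by
  intro K
  obtain ⟨s, hs, hlift⟩ := h K
  refine ⟨s, hs, fun f => ?_⟩
  choose g hg using fun i => hlift (f ∘ₗ single R (fun _ => A) i)
  refine ⟨lsum R (fun _ => A) R g, pi_ext fun i a => ?_⟩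
  simpa [lsum_piSingle, -lsum_apply] using congr($(hg i) a)

theorem isUSPseudoProjective {P : Type v} [AddCommGroup P] [Module R P]
    (h : IsUSProjectiveRel S P P) : IsUSPseudoProjective S P := fun K =>
  let ⟨s, hs, hlift⟩ := h K
  ⟨s, hs, fun f _ => hlift f⟩

end IsUSProjectiveRel

section

variable {R : Type u} [CommRing R] {S : Set R} {P : Type v} {Q : Type w}
  [AddCommGroup P] [Module R P] [AddCommGroup Q] [Module R Q]

theorem isUSEpi_of_surjective (h1 : 1 ∈ S) {f : P →ₗ[R] Q} (hf : Function.Surjective f) :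
    IsUSEpi S f :=
  ⟨1, h1, fun y => by simpa using hf y⟩

theorem IsUSEpi.linearEquiv_comp {Q' : Type*} [AddCommGroup Q'] [Module R Q'] {f : P →ₗ[R] Q}
    (hf : IsUSEpi S f) (e : Q ≃ₗ[R] Q') : IsUSEpi S (e.toLinearMap ∘ₗ f) := by
  obtain ⟨t, ht, hrange⟩ := hf
  refine ⟨t, ht, fun y => ?_⟩
  obtain ⟨x, hx⟩ := hrange (e.symm y)
  exact ⟨x, by simp [hx]⟩

theorem IsUSPseudoProjective.exists_lift_of_surjective (h : IsUSPseudoProjective S P)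
    {φ : P →ₗ[R] Q} (hφ : Function.Surjective φ) :
    ∃ s ∈ S, ∀ f : P →ₗ[R] Q, IsUSEpi S f → ∃ g : P →ₗ[R] P, s • f = φ ∘ₗ g := by
  obtain ⟨s, hs, hlift⟩ := h (ker φ)
  let e := φ.quotKerEquivOfSurjective hφ
  refine ⟨s, hs, fun f hf => ?_⟩
  obtain ⟨g, hg⟩ := hlift (e.symm.toLinearMap ∘ₗ f) (hf.linearEquiv_comp e.symm)
  refine ⟨g, LinearMap.ext fun x => ?_⟩
  simpa [e] using congr(e ($hg x))

theorem IsUSPseudoProjective.isUSQuasiProjective_of_pi {M : Type v} [AddCommGroup M]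
    [Module R M] {ι : Type*} [DecidableEq ι] {i j : ι} (hij : i ≠ j) (h1 : 1 ∈ S)
    (h : IsUSPseudoProjective S (ι → M)) : IsUSQuasiProjective S M := by
  intro K
  obtain ⟨s, hs, hlift⟩ := h.exists_lift_of_surjective (φ := K.mkQ ∘ₗ proj i)
    (K.mkQ_surjective.comp (Function.surjective_eval i))
  refine ⟨s, hs, fun f => ?_⟩
  -- The second summand makes the map surjective without changing it on the `i`-th copy.
  let F : (ι → M) →ₗ[R] M ⧸ K := f ∘ₗ proj i + K.mkQ ∘ₗ proj j
  have hF : Function.Surjective F := by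
    intro y
    obtain ⟨m, rfl⟩ := K.mkQ_surjective y
    exact ⟨Pi.single j m, by simp [F, hij]⟩
  obtain ⟨G, hG⟩ := hlift F (isUSEpi_of_surjective h1 hF)
  refine ⟨proj i ∘ₗ G ∘ₗ single R (fun _ => M) i, LinearMap.ext fun m => ?_⟩
  simpa [F, hij] using congr($hG (Pi.single i m))

end

/-- For `n ≥ 2`, `M` is `u`-`S`-quasi-projective if and only if the `n`-fold direct sum
`M ⊕ ⋯ ⊕ M` is `u`-`S`-pseudo-projective. -/
theorem uSQuasiProjective_iff_pow_uSPseudoProjective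
    {R : Type u} [CommRing R] (S : Set R) (hS : IsMultSubset S)
    {M : Type v} [AddCommGroup M] [Module R M] (n : ℕ) (hn : 2 ≤ n) :
    IsUSQuasiProjective S M ↔ IsUSPseudoProjective S (Fin n → M) := by
  refine ⟨fun hM => ?_, fun hP => ?_⟩
  · exact (IsUSProjectiveRel.pi_right hS.1 hS.2.2 hM (Fin n)).pi_left.isUSPseudoProjective
  · exact hP.isUSQuasiProjective_of_pi (i := ⟨0, by omega⟩) (j := ⟨1, by omega⟩)
      (by simp [Fin.ext_iff]) hS.1
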